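/- arXiv:1506.05506 — 2 statements merged into one kernel-verified Lean document; each statement's English description precedes it below -/
import Mathlib

section
/- The coefficient of determination for the perturbed response is R̃² = R²(1+b)/(1 + b + a(a+2)(1−R²)), where R² is the coefficient of determination of the original response. -/
/-!
The residual `e` is orthogonal to the columns of `X`, hence to `1` and to the fitted values,
so `e ⬝ᵥ (y - ȳ) = ‖e‖²`; likewise `u ⬝ᵥ (y - ȳ) = u ⬝ᵥ e = 0`. Writing
`ε = a/(1+b) • (e + √b ‖e‖ • u/‖u‖)`, both `e` and `y - ȳ` therefore have inner product
`a ‖e‖²/(1+b)` with `ε`, while `‖ε‖² = a² ‖e‖²/(1+b)`. Thus the perturbation adds the same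
amount `a(a+2)‖e‖²/(1+b)` to both squared norms in the definition of `R²`, and the formula is
algebra.
-/

open Matrix BigOperators

/-- Euclidean norm of a vector in ℝⁿ. -/
noncomputable def nrm {n : ℕ} (v : Fin n → ℝ) : ℝ := Real.sqrt (v ⬝ᵥ v)

section LeastSquares

variable {m k R : Type*} [Fintype m] [CommRing R]

noncomputable def olsResidual [Fintype k] [DecidableEq k] (X : Matrix m k R) (y : m → R) :
    m → R :=
  y - X *ᵥ ((Xᵀ * X)⁻¹ *ᵥ (Xᵀ *ᵥ y))

theorem transpose_mulVec_olsResidual [Fintype k] [DecidableEq k] {X : Matrix m k R}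
    (hX : IsUnit (Xᵀ * X).det) (y : m → R) :
    Xᵀ *ᵥ olsResidual X y = 0 := by
  rw [olsResidual, mulVec_sub, mulVec_mulVec, mulVec_mulVec, mul_nonsing_inv _ hX, one_mulVec,
    sub_self]

theorem dotProduct_const_eq_zero_of_transpose_mulVec_eq_zero {X : Matrix m k R} {j : k}
    (hj : ∀ i, X i j = 1) {v : m → R} (hv : Xᵀ *ᵥ v = 0) (c : R) :
    v ⬝ᵥ (fun _ => c) = 0 := by
  have hsum : ∑ i, v i = 0 := by
    simpa [mulVec, dotProduct, hj] using congrFun hv j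
  simp only [dotProduct, ← Finset.sum_mul, hsum, zero_mul]

theorem dotProduct_sub_const_eq_dotProduct_olsResidual [Fintype k] [DecidableEq k]
    {X : Matrix m k R} {j : k} (hj : ∀ i, X i j = 1) {v : m → R} (hv : Xᵀ *ᵥ v = 0)
    (y : m → R) (c : R) :
    v ⬝ᵥ (y - fun _ => c) = v ⬝ᵥ olsResidual X y := by
  rw [olsResidual, dotProduct_sub, dotProduct_sub,
    dotProduct_const_eq_zero_of_transpose_mulVec_eq_zero hj hv, dotProduct_mulVec,
    ← mulVec_transpose, hv, zero_dotProduct]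

end LeastSquares

section Norm

variable {n : ℕ}

theorem nrm_sq (v : Fin n → ℝ) : nrm v ^ 2 = v ⬝ᵥ v :=
  Real.sq_sqrt (Fintype.sum_nonneg fun i => mul_self_nonneg (v i))

theorem nrm_eq_zero {v : Fin n → ℝ} : nrm v = 0 ↔ v = 0 := by
  rw [← pow_eq_zero_iff two_ne_zero, nrm_sq, dotProduct_self_eq_zero]

theorem nrm_smul_inv_nrm_smul (v : Fin n → ℝ) : nrm v • (nrm v)⁻¹ • v = v := by
  by_cases hv : v = 0
  · simp [hv]
  · rw [smul_smul, mul_inv_cancel₀ (nrm_eq_zero.not.mpr hv), one_smul]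

theorem nrm_add_sq (v w : Fin n → ℝ) :
    nrm (v + w) ^ 2 = nrm v ^ 2 + 2 * (v ⬝ᵥ w) + w ⬝ᵥ w := by
  rw [nrm_sq, nrm_sq, dotProduct_add, add_dotProduct, add_dotProduct, dotProduct_comm w v]
  ring

end Norm

section Perturbation

variable {n : ℕ} {e u : Fin n → ℝ} {a b : ℝ}

/-- The paper's `ε`, with `‖e‖ • ‖e‖⁻¹ • e` simplified to `e`. -/
noncomputable def perturbation (e u : Fin n → ℝ) (a b : ℝ) : Fin n → ℝ :=
  (a / (1 + b)) • (e + (Real.sqrt b * nrm e / nrm u) • u)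

theorem smul_add_smul_eq_perturbation (e u : Fin n → ℝ) (a b : ℝ) :
    (a * nrm e / (1 + b)) • ((nrm e)⁻¹ • e + Real.sqrt b • ((nrm u)⁻¹ • u)) =
      perturbation e u a b := by
  rw [perturbation, smul_add, mul_div_right_comm, mul_smul, nrm_smul_inv_nrm_smul]
  module

theorem dotProduct_perturbation {x : Fin n → ℝ} (hxe : x ⬝ᵥ e = e ⬝ᵥ e)
    (hxu : x ⬝ᵥ u = 0) :
    x ⬝ᵥ perturbation e u a b = a * (e ⬝ᵥ e) / (1 + b) := by
  rw [perturbation, dotProduct_smul, dotProduct_add, dotProduct_smul, hxe, hxu, smul_eq_mul,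
    smul_eq_mul]
  ring

theorem perturbation_dotProduct_self (hu : u ≠ 0) (heu : e ⬝ᵥ u = 0) (hb : 0 ≤ b) :
    perturbation e u a b ⬝ᵥ perturbation e u a b = a ^ 2 * (e ⬝ᵥ e) / (1 + b) := by
  set c := Real.sqrt b * nrm e / nrm u
  have hpyth : (e + c • u) ⬝ᵥ (e + c • u) = e ⬝ᵥ e + c ^ 2 * (u ⬝ᵥ u) := by
    simp only [dotProduct_add, add_dotProduct, dotProduct_smul, smul_dotProduct, smul_eq_mul,
      dotProduct_comm u e, heu]
    ring
  have hc : c ^ 2 * (u ⬝ᵥ u) = b * (e ⬝ᵥ e) := by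
    have hu' : nrm u ≠ 0 := nrm_eq_zero.not.mpr hu
    rw [← nrm_sq, ← nrm_sq, div_pow, mul_pow, Real.sq_sqrt hb]
    field_simp
  have hb' : 1 + b ≠ 0 := by positivity
  rw [perturbation, dotProduct_smul, smul_dotProduct, hpyth, hc, smul_eq_mul, smul_eq_mul]
  field_simp

theorem nrm_add_perturbation_sq (hu : u ≠ 0) (heu : e ⬝ᵥ u = 0) (hb : 0 ≤ b)
    {x : Fin n → ℝ} (hxe : x ⬝ᵥ e = e ⬝ᵥ e) (hxu : x ⬝ᵥ u = 0) :
    nrm (x + perturbation e u a b) ^ 2 = nrm x ^ 2 + a * (a + 2) * (e ⬝ᵥ e) / (1 + b) := by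
  rw [nrm_add_sq, dotProduct_perturbation hxe hxu, perturbation_dotProduct_self hu heu hb]
  ring

end Perturbation

theorem one_sub_div_add_eq {s t a b : ℝ} (hb : 0 ≤ b) (hts : t = 0 → s = 0)
    (hne : 1 + b + a * (a + 2) * (s / t) ≠ 0) :
    1 - (s + a * (a + 2) * s / (1 + b)) / (t + a * (a + 2) * s / (1 + b)) =
      (1 - s / t) * (1 + b) / (1 + b + a * (a + 2) * (s / t)) := by
  have hb' : 1 + b ≠ 0 := by positivity
  rcases eq_or_ne t 0 with ht | ht
  · simp [ht, hts ht, hb']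
  · have hden :
        t + a * (a + 2) * s / (1 + b) = t / (1 + b) * (1 + b + a * (a + 2) * (s / t)) := by
      field_simp
    rw [one_sub_div (by rw [hden]; positivity), add_sub_add_right_eq_sub, hden,
      div_eq_div_iff (by positivity) hne]
    field_simp

theorem R_squared_perturbed_general {n p : ℕ} (X : Matrix (Fin n) (Fin (p + 1)) ℝ)
    (hX : IsUnit (Xᵀ * X).det)
    (hone : ∃ j, ∀ i, X i j = 1)
    (y e : Fin n → ℝ)
    (he : e = y - X.mulVec ((Xᵀ * X)⁻¹.mulVec (Xᵀ.mulVec y)))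
    (ybar : ℝ)
    (u : Fin n → ℝ) (hu0 : u ≠ 0)
    (hXu : Xᵀ.mulVec u = 0) (heu : e ⬝ᵥ u = 0)
    (a b : ℝ) (hb : 0 ≤ b)
    (ε : Fin n → ℝ)
    (hε : ε = (a * nrm e / (1 + b)) •
        ((nrm e)⁻¹ • e + Real.sqrt b • ((nrm u)⁻¹ • u)))
    (R2 : ℝ) (hR2 : R2 = 1 - (nrm e) ^ 2 / (nrm (y - fun _ => ybar)) ^ 2)
    (R2t : ℝ)
    (hR2t : R2t = 1 - (nrm (e + ε)) ^ 2 / (nrm (y + ε - fun _ => ybar)) ^ 2)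
    (hpos : 0 < 1 + b + a * (a + 2) * (1 - R2)) :
    R2t = R2 * (1 + b) / (1 + b + a * (a + 2) * (1 - R2)) := by
  obtain ⟨j, hj⟩ := hone
  replace he : e = olsResidual X y := he
  set d := y - fun _ => ybar
  have hXe : Xᵀ *ᵥ e = 0 := he ▸ transpose_mulVec_olsResidual hX y
  have hde : d ⬝ᵥ e = e ⬝ᵥ e := by
    rw [dotProduct_comm, dotProduct_sub_const_eq_dotProduct_olsResidual hj hXe, ← he]
  have hdu : d ⬝ᵥ u = 0 := by
    rw [dotProduct_comm, dotProduct_sub_const_eq_dotProduct_olsResidual hj hXu, ← he,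
      dotProduct_comm, heu]
  have hdt : nrm d ^ 2 = 0 → e ⬝ᵥ e = 0 := by
    rw [nrm_sq, dotProduct_self_eq_zero, ← hde]
    intro hd
    rw [hd, zero_dotProduct]
  rw [smul_add_smul_eq_perturbation] at hε
  rw [hR2, sub_sub_cancel, nrm_sq e] at hpos ⊢
  rw [hR2t, hε, add_sub_right_comm, nrm_add_perturbation_sq hu0 heu hb rfl heu,
    nrm_add_perturbation_sq hu0 heu hb hde hdu, nrm_sq e]
  exact one_sub_div_add_eq hb hdt hpos.ne'

/-- R̃² = R²(1+b)/(1 + b + a(a+2)(1−R²)). -/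
theorem R_squared_perturbed {n p : ℕ} (X : Matrix (Fin n) (Fin (p + 1)) ℝ)
    (hX : IsUnit (Xᵀ * X).det)
    (hone : ∃ j, ∀ i, X i j = 1)
    (y e : Fin n → ℝ)
    (he : e = y - X.mulVec ((Xᵀ * X)⁻¹.mulVec (Xᵀ.mulVec y)))
    (he0 : e ≠ 0)
    (ybar : ℝ) (hybar : ybar = (∑ i, y i) / (n : ℝ))
    (hy : y ≠ fun _ => ybar)
    (u : Fin n → ℝ) (hu0 : u ≠ 0)
    (hXu : Xᵀ.mulVec u = 0) (heu : e ⬝ᵥ u = 0)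
    (a b : ℝ) (ha : a ≠ 0) (hb : 0 ≤ b)
    (ε : Fin n → ℝ)
    (hε : ε = (a * nrm e / (1 + b)) •
        ((nrm e)⁻¹ • e + Real.sqrt b • ((nrm u)⁻¹ • u)))
    (R2 : ℝ) (hR2 : R2 = 1 - (nrm e) ^ 2 / (nrm (y - fun _ => ybar)) ^ 2)
    (R2t : ℝ)
    (hR2t : R2t = 1 - (nrm (e + ε)) ^ 2 / (nrm (y + ε - fun _ => ybar)) ^ 2)
    (hpos : 0 < 1 + b + a * (a + 2) * (1 - R2)) :
    R2t = R2 * (1 + b) / (1 + b + a * (a + 2) * (1 - R2)) :=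
  R_squared_perturbed_general X hX hone y e he ybar u hu0 hXu heu a b hb ε hε R2 hR2 R2t hR2t hpos
end

section
/- When a = −2, the residual norm is unchanged: ‖e + ε‖ = ‖e‖, and hence every t-value for y+ε equals the corresponding t-value for y, for any b > 0. -/
open Matrix BigOperators

/-!
Since `Xᵀ e = 0` and `Xᵀ u = 0`, also `Xᵀ ε = 0`: the least-squares coefficients of `y + ε` are
those of `y` and the new residual is `e + ε`. With `w = e/‖e‖ + √b u/‖u‖` one has `⟪w, e⟫ = ‖e‖`
and `‖w‖² = 1 + b`, so `ε = -(2⟪w, e⟫/‖w‖²) w` and `e + ε` is the reflection of `e` in the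
hyperplane `w⊥`; reflections are isometries, so `‖e + ε‖ = ‖e‖` and no t-value changes.
-/

section Reflection

variable {F : Type*} [NormedAddCommGroup F] [InnerProductSpace ℝ F]

open RealInnerProductSpace

theorem norm_sub_two_inner_div_norm_sq_smul (w x : F) :
    ‖x - (2 * ⟪w, x⟫ / ‖w‖ ^ 2) • w‖ = ‖x‖ := by
  rw [← (ℝ ∙ w)ᗮ.reflection.norm_map x, Submodule.reflection_orthogonal_apply,
    Submodule.reflection_singleton_apply, norm_neg, ← norm_neg]
  congr 1
  simp only [neg_sub, RCLike.ofReal_real_eq_id, id, two_smul]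
  module

theorem norm_add_smul_unit_add_sqrt_smul_unit {x u : F} (hxu : ⟪x, u⟫ = 0) (hx : x ≠ 0)
    (hu : u ≠ 0) {b : ℝ} (hb : 0 ≤ b) :
    ‖x + (-2 * ‖x‖ / (1 + b)) • (‖x‖⁻¹ • x + √b • (‖u‖⁻¹ • u))‖ = ‖x‖ := by
  set w := ‖x‖⁻¹ • x + √b • (‖u‖⁻¹ • u)
  have hx' : ‖x‖ ≠ 0 := norm_ne_zero_iff.mpr hx
  have hu' : ‖u‖ ≠ 0 := norm_ne_zero_iff.mpr hu
  have hwx : ⟪w, x⟫ = ‖x‖ := by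
    simp only [w, inner_add_left, real_inner_smul_left, real_inner_comm x u, hxu, mul_zero,
      add_zero, real_inner_self_eq_norm_sq]
    field_simp
  have hww : ‖w‖ ^ 2 = 1 + b := by
    rw [norm_add_sq_real, real_inner_smul_left, real_inner_smul_right, real_inner_smul_right,
      hxu]
    simp [norm_smul, hx', hu', Real.sq_sqrt hb]
  convert norm_sub_two_inner_div_norm_sq_smul w x using 2
  rw [hwx, hww, sub_eq_add_neg, ← neg_smul]
  ring_nf

end Reflection

theorem nrm_eq_norm_toLp {n : ℕ} (v : Fin n → ℝ) : nrm v = ‖WithLp.toLp 2 v‖ := by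
  rw [norm_eq_sqrt_real_inner, EuclideanSpace.inner_toLp_toLp, star_trivial, nrm]

section LeastSquares

variable {m k R : Type*} [Fintype m] [Fintype k] [DecidableEq k] [CommRing R]
  (X : Matrix m k R)

noncomputable def olsCoef (y : m → R) : k → R := (Xᵀ * X)⁻¹ *ᵥ (Xᵀ *ᵥ y)

theorem transpose_mulVec_sub_mulVec_olsCoef (hX : IsUnit (Xᵀ * X).det) (y : m → R) :
    Xᵀ *ᵥ (y - X *ᵥ olsCoef X y) = 0 := by
  rw [olsCoef, mulVec_sub, mulVec_mulVec, mulVec_mulVec, mul_nonsing_inv _ hX, one_mulVec,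
    sub_self]

theorem olsCoef_add_of_transpose_mulVec_eq_zero {y ε : m → R} (hε : Xᵀ *ᵥ ε = 0) :
    olsCoef X (y + ε) = olsCoef X y := by
  rw [olsCoef, olsCoef, mulVec_add, hε, add_zero]

end LeastSquares

theorem t_values_invariant_a_eq_neg_two_general {n p : ℕ}
    (X : Matrix (Fin n) (Fin (p + 1)) ℝ)
    (hX : IsUnit (Xᵀ * X).det)
    (y e : Fin n → ℝ)
    (he : e = y - X.mulVec ((Xᵀ * X)⁻¹.mulVec (Xᵀ.mulVec y)))
    (he0 : e ≠ 0) (u : Fin n → ℝ) (hu0 : u ≠ 0)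
    (hXu : Xᵀ.mulVec u = 0) (heu : e ⬝ᵥ u = 0)
    (b : ℝ) (hb : 0 < b)
    (ε : Fin n → ℝ)
    (hε : ε = ((-2 : ℝ) * nrm e / (1 + b)) •
        ((nrm e)⁻¹ • e + Real.sqrt b • ((nrm u)⁻¹ • u)))
    (βhat βhatt : Fin (p + 1) → ℝ)
    (hβ : βhat = (Xᵀ * X)⁻¹.mulVec (Xᵀ.mulVec y))
    (hβt : βhatt = (Xᵀ * X)⁻¹.mulVec (Xᵀ.mulVec (y + ε)))
    (d : Fin (p + 1) → ℝ)
    (t tt : Fin (p + 1) → ℝ)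
    (ht : t = fun j => Real.sqrt ((n : ℝ) - p - 1) / d j * (βhat j / nrm e))
    (htt : tt = fun j =>
      Real.sqrt ((n : ℝ) - p - 1) / d j *
        (βhatt j / nrm ((y + ε) - X.mulVec βhatt))) :
    nrm (e + ε) = nrm e ∧ ∀ j, tt j = t j := by
  have hXe : Xᵀ *ᵥ e = 0 := he ▸ transpose_mulVec_sub_mulVec_olsCoef X hX y
  have hXε : Xᵀ *ᵥ ε = 0 := by simp [hε, mulVec_smul, mulVec_add, hXe, hXu]
  have hβ_eq : βhatt = βhat := by
    rw [hβt, hβ]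
    exact olsCoef_add_of_transpose_mulVec_eq_zero X hXε
  have hres : y + ε - X *ᵥ βhatt = e + ε := by
    rw [hβ_eq, hβ, he]
    abel
  have hnrm : nrm (e + ε) = nrm e := by
    have hxu : inner ℝ (WithLp.toLp 2 e) (WithLp.toLp 2 u) = 0 := by
      rwa [EuclideanSpace.inner_toLp_toLp, star_trivial, dotProduct_comm]
    have h := norm_add_smul_unit_add_sqrt_smul_unit hxu (by simpa using he0)
      (by simpa using hu0) hb.le
    simpa only [hε, nrm_eq_norm_toLp, WithLp.toLp_add, WithLp.toLp_smul] using h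
  exact ⟨hnrm, fun j => by rw [htt, ht, hres, hnrm, hβ_eq]⟩

/-- When a = −2, ‖e + ε‖ = ‖e‖, and hence every t-value for
y+ε equals the corresponding t-value for y, for any b > 0. -/
theorem t_values_invariant_a_eq_neg_two {n p : ℕ}
    (X : Matrix (Fin n) (Fin (p + 1)) ℝ)
    (hX : IsUnit (Xᵀ * X).det)
    (y e : Fin n → ℝ)
    (he : e = y - X.mulVec ((Xᵀ * X)⁻¹.mulVec (Xᵀ.mulVec y)))
    (he0 : e ≠ 0) (u : Fin n → ℝ) (hu0 : u ≠ 0)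
    (hXu : Xᵀ.mulVec u = 0) (heu : e ⬝ᵥ u = 0)
    (b : ℝ) (hb : 0 < b)
    (ε : Fin n → ℝ)
    (hε : ε = ((-2 : ℝ) * nrm e / (1 + b)) •
        ((nrm e)⁻¹ • e + Real.sqrt b • ((nrm u)⁻¹ • u)))
    (βhat βhatt : Fin (p + 1) → ℝ)
    (hβ : βhat = (Xᵀ * X)⁻¹.mulVec (Xᵀ.mulVec y))
    (hβt : βhatt = (Xᵀ * X)⁻¹.mulVec (Xᵀ.mulVec (y + ε)))
    (d : Fin (p + 1) → ℝ) (hd : d = fun j => (Xᵀ * X)⁻¹ j j)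
    (t tt : Fin (p + 1) → ℝ)
    (ht : t = fun j => Real.sqrt ((n : ℝ) - p - 1) / d j * (βhat j / nrm e))
    (htt : tt = fun j =>
      Real.sqrt ((n : ℝ) - p - 1) / d j *
        (βhatt j / nrm ((y + ε) - X.mulVec βhatt))) :
    nrm (e + ε) = nrm e ∧ ∀ j, tt j = t j :=
  t_values_invariant_a_eq_neg_two_general X hX y e he he0 u hu0 hXu heu b hb ε hε βhat βhatt hβ hβt
    d t tt ht htt
end
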